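/- For A = (a_{ij}) ∈ ℚ^{m×n}, a quaternion matrix G belongs to the Fréchet subdifferential of the ℓ₀-norm at A if and only if G vanishes on the support of A; that is, ∂^F‖A‖₀ = { B ∈ ℚ^{m×n} : b_{ij} = 0 whenever a_{ij} ≠ 0 }. -/
import Mathlib


open Quaternion
open scoped Classical

/-- The Frobenius norm of a quaternion matrix. -/
noncomputable def frobNorm {m n : ℕ} (A : Matrix (Fin m) (Fin n) ℍ[ℝ]) : ℝ :=
  Real.sqrt (∑ p, ∑ q, ‖A p q‖ ^ 2)

/-- The ℓ₀-"norm" of a quaternion matrix: the number of nonzero entries. -/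
noncomputable def l0norm {m n : ℕ} (A : Matrix (Fin m) (Fin n) ℍ[ℝ]) : ℕ :=
  (Finset.univ.filter fun pq : Fin m × Fin n => A pq.1 pq.2 ≠ 0).card

/-- The R-product (real product) of two quaternion matrices, i.e. the real part
of the inner product Tr(A*B). -/
def RprodM {m n : ℕ} (A B : Matrix (Fin m) (Fin n) ℍ[ℝ]) : ℝ :=
  ∑ p, ∑ q, ((A p q).re * (B p q).re + (A p q).imI * (B p q).imI +
    (A p q).imJ * (B p q).imJ + (A p q).imK * (B p q).imK)

/-- `G` is a Fréchet subgradient of `h` at `A`: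
liminf_{X→A, X≠A} (h X − h A − G·(X−A))/‖X−A‖ ≥ 0. -/
def IsFSubgrad {m n : ℕ} (h : Matrix (Fin m) (Fin n) ℍ[ℝ] → ℝ)
    (A G : Matrix (Fin m) (Fin n) ℍ[ℝ]) : Prop :=
  ∀ ε > (0 : ℝ), ∃ δ > (0 : ℝ), ∀ X : Matrix (Fin m) (Fin n) ℍ[ℝ],
    X ≠ A → frobNorm (X - A) ≤ δ →
      -(ε * frobNorm (X - A)) ≤ h X - h A - RprodM G (X - A)

lemma frobNorm_nonneg {m n : ℕ} (A : Matrix (Fin m) (Fin n) ℍ[ℝ]) : 0 ≤ frobNorm A :=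
  Real.sqrt_nonneg _

lemma entry_le_frob {m n : ℕ} (A : Matrix (Fin m) (Fin n) ℍ[ℝ]) (p q) :
    ‖A p q‖ ≤ frobNorm A := by
  have h1 : ‖A p q‖^2 ≤ ∑ i, ∑ j, ‖A i j‖ ^ 2 := by
    have h2 : ‖A p q‖^2 ≤ ∑ j, ‖A p j‖^2 :=
      Finset.single_le_sum (f := fun j => ‖A p j‖^2) (fun j _ => by positivity) (Finset.mem_univ q)
    exact h2.trans (Finset.single_le_sum (f := fun i => ∑ j, ‖A i j‖^2)
      (fun i _ => by positivity) (Finset.mem_univ p))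
  calc ‖A p q‖ = Real.sqrt (‖A p q‖^2) := by
        rw [Real.sqrt_sq (norm_nonneg _)]
    _ ≤ frobNorm A := Real.sqrt_le_sqrt h1

lemma frob_stdBasis {m n : ℕ} (p : Fin m) (q : Fin n) (v : ℍ[ℝ]) :
    frobNorm (Matrix.single p q v) = ‖v‖ := by
  unfold frobNorm
  have : ∑ i, ∑ j, ‖Matrix.single p q v i j‖^2 = ‖v‖^2 := by
    rw [Finset.sum_eq_single p]
    · rw [Finset.sum_eq_single q]
      · simp [Matrix.single]
      · intro j _ hj; simp [Matrix.single, hj.symm]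
      · simp
    · intro i _ hi; apply Finset.sum_eq_zero; intro j _
      simp [Matrix.single, hi.symm]
    · simp
  rw [this, Real.sqrt_sq (norm_nonneg _)]

lemma rprod_eq_inner {m n : ℕ} (A B : Matrix (Fin m) (Fin n) ℍ[ℝ]) :
    RprodM A B = ∑ p, ∑ q, (@inner ℝ _ _ (A p q) (B p q)) := by
  unfold RprodM
  congr 1; ext p; congr 1; ext q
  rw [Quaternion.inner_def]; simp [Quaternion.re_mul]

lemma rprod_stdBasis {m n : ℕ} (G : Matrix (Fin m) (Fin n) ℍ[ℝ]) (p q) (v : ℍ[ℝ]) :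
    RprodM G (Matrix.single p q v) = @inner ℝ _ _ (G p q) v := by
  rw [rprod_eq_inner]
  rw [Finset.sum_eq_single p]
  · rw [Finset.sum_eq_single q]
    · simp [Matrix.single]
    · intro j _ hj; simp [Matrix.single, hj.symm]
    · simp
  · intro i _ hi; apply Finset.sum_eq_zero; intro j _
    simp [Matrix.single, hi.symm]
  · simp

theorem frechet_subdifferential_l0norm (m n : ℕ) (A : Matrix (Fin m) (Fin n) ℍ[ℝ]) :
    {G : Matrix (Fin m) (Fin n) ℍ[ℝ] | IsFSubgrad (fun X => (l0norm X : ℝ)) A G}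
      = {B : Matrix (Fin m) (Fin n) ℍ[ℝ] | ∀ p q, A p q ≠ 0 → B p q = 0} := by
  ext G
  simp only [Set.mem_setOf_eq]
  constructor
  · -- forward
    intro hG p q hA
    by_contra hg
    have hgn : (0:ℝ) < ‖G p q‖ := norm_pos_iff.mpr hg
    obtain ⟨δ, hδ, hsub⟩ := hG (‖G p q‖/2) (by positivity)
    set t : ℝ := min δ (‖A p q‖/2) / ‖G p q‖ with ht
    have hApos : (0:ℝ) < ‖A p q‖ := norm_pos_iff.mpr hA
    have htpos : 0 < t := by
      apply div_pos _ hgn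
      exact lt_min hδ (by positivity)
    set v : ℍ[ℝ] := t • G p q with hv
    have hvnorm : ‖v‖ = min δ (‖A p q‖/2) := by
      rw [hv, norm_smul, Real.norm_eq_abs, abs_of_pos htpos, ht, div_mul_cancel₀]
      exact ne_of_gt hgn
    have hvne : v ≠ 0 := by
      rw [hv]; exact smul_ne_zero (ne_of_gt htpos) hg
    set X := A + Matrix.single p q v with hX
    have hXA : X - A = Matrix.single p q v := by rw [hX, add_sub_cancel_left]
    have hXne : X ≠ A := by
      intro h
      have : Matrix.single p q v = 0 := by
        rw [← hXA, h, sub_self]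
      have := congrFun (congrFun this p) q
      simp [Matrix.single] at this
      exact hvne this
    have hfrob : frobNorm (X - A) = ‖v‖ := by rw [hXA, frob_stdBasis]
    have hfle : frobNorm (X - A) ≤ δ := by rw [hfrob, hvnorm]; exact min_le_left _ _
    -- l0norm X = l0norm A
    have hXpq : X p q = A p q + v := by simp [hX, Matrix.single]
    have hvlt : ‖v‖ < ‖A p q‖ := by
      rw [hvnorm]; exact lt_of_le_of_lt (min_le_right _ _) (by linarith)
    have hXpqne : X p q ≠ 0 := by
      intro h0
      have hveq : v = -A p q := by
        have h1 := h0; rw [hXpq] at h1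
        exact eq_neg_of_add_eq_zero_right h1
      have : ‖v‖ = ‖A p q‖ := by rw [hveq, norm_neg]
      linarith
    have hl0 : l0norm X = l0norm A := by
      unfold l0norm
      congr 1
      apply Finset.filter_congr
      intro pq _
      by_cases hpq : pq.1 = p ∧ pq.2 = q
      · obtain ⟨h1, h2⟩ := hpq; subst h1; subst h2
        simp [hXpqne, hA]
      · have : X pq.1 pq.2 = A pq.1 pq.2 := by
          rw [hX]; simp only [Matrix.add_apply]
          have : Matrix.single p q v pq.1 pq.2 = 0 := by
            simp only [Matrix.single, Matrix.of_apply]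
            rw [if_neg]
            intro ⟨h1, h2⟩; exact hpq ⟨h1.symm, h2.symm⟩
          rw [this, add_zero]
        rw [this]
    have hrp : RprodM G (X - A) = t * ‖G p q‖^2 := by
      rw [hXA, rprod_stdBasis, hv, real_inner_smul_right, real_inner_self_eq_norm_sq]
    have this2 := hsub X hXne hfle
    have this : -(‖G p q‖/2 * frobNorm (X - A)) ≤ (l0norm X : ℝ) - (l0norm A : ℝ) - RprodM G (X - A) := this2
    rw [hl0] at this
    rw [hrp, hfrob, hvnorm] at this
    simp only [sub_self, zero_sub] at this
    -- -(‖G p q‖/2 * min δ (‖A p q‖/2)) ≤ - (t * ‖G p q‖^2)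
    have hmin : min δ (‖A p q‖/2) = t * ‖G p q‖ := by
      rw [ht, div_mul_cancel₀]; exact ne_of_gt hgn
    rw [hmin] at this
    nlinarith [mul_pos htpos (pow_pos hgn 2)]
  · -- backward
    intro hGv ε hε
    set M : ℝ := 1 + ∑ p, ∑ q, ‖G p q‖ with hM
    have hMpos : 0 < M := by
      have : (0:ℝ) ≤ ∑ p, ∑ q, ‖G p q‖ := by positivity
      linarith
    have hGvle : ∀ p q, ‖G p q‖ ≤ M := by
      intro p q
      have h2 : ‖G p q‖ ≤ ∑ j, ‖G p j‖ :=
        Finset.single_le_sum (f := fun j => ‖G p j‖) (fun j _ => norm_nonneg _) (Finset.mem_univ q)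
      have h3 : (∑ j, ‖G p j‖) ≤ ∑ i, ∑ j, ‖G i j‖ :=
        Finset.single_le_sum (f := fun i => ∑ j, ‖G i j‖) (fun i _ => by positivity)
          (Finset.mem_univ p)
      linarith
    -- minimal nonzero entry norm of A
    set T : Finset (Fin m × Fin n) := Finset.univ.filter fun pq => A pq.1 pq.2 ≠ 0 with hT
    set d : ℝ := if hne : T.Nonempty then (T.image fun pq => ‖A pq.1 pq.2‖).min' (hne.image _) / 2 else 1 with hd
    have hdpos : 0 < d := by
      rw [hd]
      split_ifs with hne
      · apply div_pos _ two_pos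
        have hmem := Finset.min'_mem (T.image fun pq => ‖A pq.1 pq.2‖) (hne.image _)
        obtain ⟨pq, hpqT, hpqe⟩ := Finset.mem_image.mp hmem
        rw [← hpqe]
        have : A pq.1 pq.2 ≠ 0 := (Finset.mem_filter.mp hpqT).2
        exact norm_pos_iff.mpr this
      · exact one_pos
    have hdlt : ∀ p q, A p q ≠ 0 → d < ‖A p q‖ := by
      intro p q hpq
      have hmemT : (p, q) ∈ T := Finset.mem_filter.mpr ⟨Finset.mem_univ _, hpq⟩
      have hne : T.Nonempty := ⟨(p, q), hmemT⟩
      rw [hd, dif_pos hne]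
      have hmin' : (T.image fun pq => ‖A pq.1 pq.2‖).min' (hne.image _) ≤ ‖A p q‖ :=
        Finset.min'_le _ _ (Finset.mem_image.mpr ⟨(p, q), hmemT, rfl⟩)
      have : 0 < ‖A p q‖ := norm_pos_iff.mpr hpq
      linarith
    refine ⟨min d (1/M), lt_min hdpos (by positivity), ?_⟩
    intro X hXne hfle
    have hδd : frobNorm (X - A) ≤ d := hfle.trans (min_le_left _ _)
    have hδM : frobNorm (X - A) ≤ 1/M := hfle.trans (min_le_right _ _)
    have hsupp : ∀ p q, A p q ≠ 0 → X p q ≠ 0 := by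
      intro p q hpq hX0
      have h1 : ‖X p q - A p q‖ ≤ frobNorm (X - A) := by
        have := entry_le_frob (X - A) p q
        rwa [Matrix.sub_apply] at this
      rw [hX0, zero_sub, norm_neg] at h1
      exact absurd (h1.trans hδd) (not_le.mpr (hdlt p q hpq))
    set S : Finset (Fin m × Fin n) :=
      Finset.univ.filter fun pq => A pq.1 pq.2 = 0 ∧ X pq.1 pq.2 ≠ 0 with hS
    have hTX : (Finset.univ.filter fun pq : Fin m × Fin n => X pq.1 pq.2 ≠ 0) = T ∪ S := by
      ext pq
      simp only [hS, hT, Finset.mem_filter, Finset.mem_union, Finset.mem_univ, true_and]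
      constructor
      · intro hx
        by_cases hA0 : A pq.1 pq.2 = 0
        · exact Or.inr ⟨hA0, hx⟩
        · exact Or.inl hA0
      · rintro (hA0 | ⟨_, hx⟩)
        · exact hsupp _ _ hA0
        · exact hx
    have hdisj : Disjoint T S := by
      rw [Finset.disjoint_left]
      intro pq hpqT hpqS
      exact (Finset.mem_filter.mp hpqT).2 (Finset.mem_filter.mp hpqS).2.1
    have hcard : l0norm X = l0norm A + S.card := by
      unfold l0norm
      rw [hTX, Finset.card_union_of_disjoint hdisj, hT]
    have hMδ : M * frobNorm (X - A) ≤ 1 := by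
      rw [← mul_one_div_cancel (ne_of_gt hMpos)]
      exact mul_le_mul_of_nonneg_left hδM (le_of_lt hMpos)
    have hterm : ∀ p q, @inner ℝ _ _ (G p q) ((X - A) p q) ≤
        (if A p q = 0 ∧ X p q ≠ 0 then M * frobNorm (X - A) else 0) := by
      intro p q
      split_ifs with h
      · calc @inner ℝ _ _ (G p q) ((X - A) p q) ≤ ‖G p q‖ * ‖(X - A) p q‖ :=
              real_inner_le_norm _ _
          _ ≤ M * frobNorm (X - A) :=
              mul_le_mul (hGvle p q) (entry_le_frob (X - A) p q) (norm_nonneg _)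
                (le_of_lt hMpos)
      · by_cases hA0 : A p q = 0
        · have hX0 : X p q = 0 := by
            by_contra hx
            exact h ⟨hA0, hx⟩
          have : (X - A) p q = 0 := by rw [Matrix.sub_apply, hX0, hA0, sub_zero]
          rw [this, inner_zero_right]
        · rw [hGv p q hA0, inner_zero_left]
    have hrple : RprodM G (X - A) ≤ (S.card : ℝ) * (M * frobNorm (X - A)) := by
      rw [rprod_eq_inner]
      calc (∑ p, ∑ q, @inner ℝ _ _ (G p q) ((X - A) p q))
          ≤ ∑ p, ∑ q, (if A p q = 0 ∧ X p q ≠ 0 then M * frobNorm (X - A) else 0) :=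
            Finset.sum_le_sum fun p _ => Finset.sum_le_sum fun q _ => hterm p q
        _ = (S.card : ℝ) * (M * frobNorm (X - A)) := by
            rw [← Finset.sum_product' (f := fun p q =>
              (if A p q = 0 ∧ X p q ≠ 0 then M * frobNorm (X - A) else 0))]
            rw [Finset.sum_ite, Finset.sum_const, Finset.sum_const_zero, add_zero,
              nsmul_eq_mul, Finset.univ_product_univ]
    have hcast : ((l0norm X : ℝ)) - (l0norm A : ℝ) = (S.card : ℝ) := by
      rw [hcard]; push_cast; ring
    have hSnn : (0:ℝ) ≤ (S.card : ℝ) := Nat.cast_nonneg _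
    have hfnn : 0 ≤ frobNorm (X - A) := frobNorm_nonneg _
    have hεf : 0 ≤ ε * frobNorm (X - A) := mul_nonneg (le_of_lt hε) hfnn
    simp only []
    nlinarith [mul_nonneg hSnn (sub_nonneg.mpr hMδ), hcast, hrple, hεf]
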